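/- Let Ω ⊂ ℝⁿ be bounded open with |Ω| > 0, q > 1, and let f lie in weak-L^q(Ω), i.e. there is C ≥ 0 with |{x ∈ Ω : |f(x)| > t}| ≤ C/t^q for all t > 0. Then f belongs to the grand Lebesgue space L^{q)}(Ω). -/

import Mathlib

/-!
By the layer-cake formula, `∫ |f|^p ≤ ∫₀^∞ μ {|f|^p > t} dt`, and the weak-type bound controls the
distribution function by `|Ω|` on `(0, 1]` and by `C t^(-q/p)` on `(1, ∞)`. Hence
`∫_Ω |f|^(q-ε) ≤ |Ω| + C (q - ε) / ε`: the blow-up as `ε → 0` is exactly of order `1/ε`, which the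
factor `ε` in the grand norm absorbs, so `ε ∫_Ω |f|^(q-ε) ≤ q |Ω| + q C` uniformly in `ε`.
-/

open MeasureTheory ENNReal Set Filter

lemma ENNReal.rpow_le_max_one {x : ℝ≥0∞} {r : ℝ} (hr₀ : 0 ≤ r) (hr₁ : r ≤ 1) :
    x ^ r ≤ max 1 x := by
  rcases le_total x 1 with hx | hx
  · exact (rpow_le_one hx hr₀).trans (le_max_left _ _)
  · calc x ^ r ≤ x ^ (1 : ℝ) := rpow_le_rpow_of_exponent_le hx hr₁
      _ = x := rpow_one x
      _ ≤ max 1 x := le_max_right _ _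

theorem lintegral_Ioi_rpow_of_lt {a : ℝ} (ha : a < -1) {c : ℝ} (hc : 0 < c) :
    ∫⁻ t in Ioi c, ENNReal.ofReal (t ^ a) = ENNReal.ofReal (-c ^ (a + 1) / (a + 1)) := by
  have h_nonneg : 0 ≤ᵐ[volume.restrict (Ioi c)] fun t : ℝ => t ^ a :=
    (ae_restrict_iff' measurableSet_Ioi).2 <|
      Eventually.of_forall fun t ht => Real.rpow_nonneg (hc.trans ht).le a
  rw [← ofReal_integral_eq_lintegral_ofReal (integrableOn_Ioi_rpow_of_lt ha hc) h_nonneg,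
    integral_Ioi_rpow_of_lt ha hc]

namespace MeasureTheory

variable {α : Type*} [MeasurableSpace α]

theorem lintegral_ofReal_le_lintegral_meas_lt (μ : Measure α) {f : α → ℝ} (hf : 0 ≤ f) :
    ∫⁻ x, ENNReal.ofReal (f x) ∂μ ≤ ∫⁻ t in Ioi 0, μ {x | t < f x} := by
  obtain ⟨g, hg, hgf, hfg⟩ := exists_measurable_le_lintegral_eq μ fun x => ENNReal.ofReal (f x)
  have hg_ne_top : ∀ x, g x ≠ ⊤ := fun x => ne_top_of_le_ne_top ofReal_ne_top (hgf x)
  calc ∫⁻ x, ENNReal.ofReal (f x) ∂μ = ∫⁻ x, ENNReal.ofReal (g x).toReal ∂μ := by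
        simp only [hfg, ofReal_toReal (hg_ne_top _)]
    _ = ∫⁻ t in Ioi 0, μ {x | t < (g x).toReal} :=
        lintegral_eq_lintegral_meas_lt μ (Eventually.of_forall fun _ => toReal_nonneg)
          hg.ennreal_toReal.aemeasurable
    _ ≤ ∫⁻ t in Ioi 0, μ {x | t < f x} :=
        lintegral_mono fun t => measure_mono fun x hx =>
          hx.trans_le (toReal_le_of_le_ofReal (hf x) (hgf x))

theorem meas_lt_rpow_le_of_meas_lt_le (μ : Measure α) {f : α → ℝ} {p q C : ℝ} (hp : 0 < p)
    (hweak : ∀ t, 0 < t → μ {x | t < |f x|} ≤ ENNReal.ofReal (C / t ^ q)) {t : ℝ} (ht : 0 < t) :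
    μ {x | t < |f x| ^ p} ≤ ENNReal.ofReal C * ENNReal.ofReal (t ^ (-(q / p))) := by
  have h_set : {x | t < |f x| ^ p} = {x | t ^ p⁻¹ < |f x|} := by
    ext x
    exact (Real.rpow_inv_lt_iff_of_pos ht.le (abs_nonneg _) hp).symm
  have h_pow : C / (t ^ p⁻¹) ^ q = C * t ^ (-(q / p)) := by
    rw [← Real.rpow_mul ht.le, Real.rpow_neg ht.le, div_eq_mul_inv, inv_mul_eq_div]
  rw [← ofReal_mul' (Real.rpow_nonneg ht.le _), h_set, ← h_pow]
  exact hweak _ (Real.rpow_pos_of_pos ht _)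

theorem lintegral_rpow_le_of_meas_lt_le (μ : Measure α) {f : α → ℝ} {p q C : ℝ} (hp : 0 < p)
    (hpq : p < q) (hweak : ∀ t, 0 < t → μ {x | t < |f x|} ≤ ENNReal.ofReal (C / t ^ q)) :
    ∫⁻ x, ENNReal.ofReal |f x| ^ p ∂μ ≤
      μ univ + ENNReal.ofReal C * ENNReal.ofReal (p / (q - p)) := by
  have h_exp : -(q / p) < -1 := by
    rw [neg_lt_neg_iff, one_lt_div hp]; exact hpq
  have h_tail :
      ∫⁻ t in Ioi (1 : ℝ), ENNReal.ofReal (t ^ (-(q / p))) = ENNReal.ofReal (p / (q - p)) := by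
    have h_exp_succ : -(q / p) + 1 = -((q - p) / p) := by field_simp; ring
    rw [lintegral_Ioi_rpow_of_lt h_exp one_pos, Real.one_rpow, h_exp_succ, neg_div_neg_eq,
      one_div_div]
  calc ∫⁻ x, ENNReal.ofReal |f x| ^ p ∂μ = ∫⁻ x, ENNReal.ofReal (|f x| ^ p) ∂μ := by
        simp only [ofReal_rpow_of_nonneg (abs_nonneg _) hp.le]
    _ ≤ ∫⁻ t in Ioi 0, μ {x | t < |f x| ^ p} :=
        lintegral_ofReal_le_lintegral_meas_lt μ fun x => Real.rpow_nonneg (abs_nonneg _) _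
    _ = (∫⁻ t in Ioc 0 1, μ {x | t < |f x| ^ p}) + ∫⁻ t in Ioi 1, μ {x | t < |f x| ^ p} := by
        rw [← Ioc_union_Ioi_eq_Ioi zero_le_one,
          lintegral_union measurableSet_Ioi (Ioc_disjoint_Ioi le_rfl)]
    _ ≤ (∫⁻ _ in Ioc (0 : ℝ) 1, μ univ) +
          ∫⁻ t in Ioi 1, ENNReal.ofReal C * ENNReal.ofReal (t ^ (-(q / p))) := by
        refine add_le_add (lintegral_mono fun _ => measure_mono (subset_univ _))
          (setLIntegral_mono' measurableSet_Ioi fun t ht => ?_)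
        exact meas_lt_rpow_le_of_meas_lt_le μ hp hweak (zero_lt_one.trans ht)
    _ = μ univ + ENNReal.ofReal C * ENNReal.ofReal (p / (q - p)) := by
        rw [setLIntegral_const, Real.volume_Ioc, lintegral_const_mul _ (by fun_prop), h_tail]
        simp

end MeasureTheory

theorem stmt4_general {n : ℕ} (Ω : Set (EuclideanSpace ℝ (Fin n)))
    (hΩo : IsOpen Ω) (hΩb : Bornology.IsBounded Ω)
    (hΩpos : 0 < volume Ω)
    (q : ℝ)
    (f : EuclideanSpace ℝ (Fin n) → ℝ)
    (C : ℝ)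
    (hweak : ∀ t : ℝ, 0 < t →
      (volume {x | x ∈ Ω ∧ t < |f x|}).toReal ≤ C / t ^ q) :
    ∃ M : ℝ≥0∞, M ≠ ⊤ ∧ ∀ ε : ℝ, 0 < ε → ε < q - 1 →
      ((ENNReal.ofReal ε / volume Ω) *
        ∫⁻ x in Ω, ENNReal.ofReal |f x| ^ (q - ε)) ^ (1 / (q - ε)) ≤ M := by
  have hΩ_ne_top : volume Ω ≠ ⊤ := hΩb.measure_lt_top.ne
  have hweak_restrict : ∀ t, 0 < t →
      volume.restrict Ω {x | t < |f x|} ≤ ENNReal.ofReal (C / t ^ q) := by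
    intro t ht
    rw [Measure.restrict_apply' hΩo.measurableSet, inter_comm,
      ← ofReal_toReal (measure_ne_top_of_subset inter_subset_left hΩ_ne_top)]
    exact ofReal_le_ofReal (hweak t ht)
  set B := ENNReal.ofReal q * volume Ω + ENNReal.ofReal C * ENNReal.ofReal q
  refine ⟨max 1 (B / volume Ω), by finiteness, fun ε hε hεq => ?_⟩
  have hp : 1 < q - ε := by linarith
  have h_scaled : ENNReal.ofReal ε * ∫⁻ x in Ω, ENNReal.ofReal |f x| ^ (q - ε) ≤ B := by
    calc ENNReal.ofReal ε * ∫⁻ x in Ω, ENNReal.ofReal |f x| ^ (q - ε)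
        ≤ ENNReal.ofReal ε * (volume Ω + ENNReal.ofReal C * ENNReal.ofReal ((q - ε) / ε)) := by
          have h := lintegral_rpow_le_of_meas_lt_le (volume.restrict Ω) (p := q - ε)
            (by linarith) (by linarith) hweak_restrict
          rw [_root_.sub_sub_cancel, Measure.restrict_apply_univ] at h
          gcongr
      _ = ENNReal.ofReal ε * volume Ω + ENNReal.ofReal C * ENNReal.ofReal (q - ε) := by
          rw [mul_add, mul_left_comm, ← ofReal_mul hε.le, mul_div_cancel₀ _ hε.ne']
      _ ≤ B := by simp only [B]; gcongr <;> linarith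
  calc (ENNReal.ofReal ε / volume Ω * ∫⁻ x in Ω, ENNReal.ofReal |f x| ^ (q - ε)) ^ (1 / (q - ε))
      ≤ (B / volume Ω) ^ (1 / (q - ε)) := by
        gcongr
        rw [div_eq_mul_inv, mul_right_comm, ← div_eq_mul_inv]
        exact ENNReal.div_le_div_right h_scaled _
    _ ≤ max 1 (B / volume Ω) :=
        rpow_le_max_one (by positivity) ((div_le_one (by linarith)).2 hp.le)

/-- If Ω ⊂ ℝⁿ is bounded open with |Ω| > 0, q > 1, and f is in
weak-L^q(Ω), i.e. |{x ∈ Ω : |f x| > t}| ≤ C/t^q for all t > 0, then f belongs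
to the grand Lebesgue space L^{q)}(Ω). -/
theorem stmt4 {n : ℕ} (Ω : Set (EuclideanSpace ℝ (Fin n)))
    (hΩo : IsOpen Ω) (hΩb : Bornology.IsBounded Ω)
    (hΩpos : 0 < volume Ω)
    (q : ℝ) (hq : 1 < q)
    (f : EuclideanSpace ℝ (Fin n) → ℝ)
    (C : ℝ) (hC : 0 ≤ C)
    (hweak : ∀ t : ℝ, 0 < t →
      (volume {x | x ∈ Ω ∧ t < |f x|}).toReal ≤ C / t ^ q) :
    ∃ M : ℝ≥0∞, M ≠ ⊤ ∧ ∀ ε : ℝ, 0 < ε → ε < q - 1 →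
      ((ENNReal.ofReal ε / volume Ω) *
        ∫⁻ x in Ω, ENNReal.ofReal |f x| ^ (q - ε)) ^ (1 / (q - ε)) ≤ M :=
  stmt4_general Ω hΩo hΩb hΩpos q f C hweak
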